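/- Let A₀ and A = A₀ + Q be bounded self-adjoint operators on L²(Ω) where Q is multiplication by a bounded function q, and let u(t) = cos(√A t)g and w⁰(t) = (√A₀)⁻¹ sin(√A₀ t) g (assuming A₀ positive definite). Then the Lippmann–Schwinger identity holds: ⟨g, cos(√A₀ t) g⟩ − ⟨g, cos(√A t) g⟩ = ∫₀ᵗ ⟨w⁰(t−s), Q u(s)⟩ ds. -/

import Mathlib

open scoped RealInnerProductSpace
open Matrix

variable {H : Type*} [NormedAddCommGroup H] [InnerProductSpace ℝ H] [CompleteSpace H]

/-- `cos(√A t)`, realized through the entire power series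
`∑ (-1)^k t^(2k) A^k / (2k)!`, which agrees with the continuous functional
calculus applied to `λ ↦ cos (t √λ)` for self-adjoint positive semidefinite `A`. -/
noncomputable def cosSqrt (A : H →L[ℝ] H) (t : ℝ) : H →L[ℝ] H :=
  ∑' k : ℕ, ((-1 : ℝ) ^ k * t ^ (2 * k) / (2 * k).factorial) • A ^ k

/-- `(√A)⁻¹ sin(√A t)`, realized through the entire power series
`∑ (-1)^k t^(2k+1) A^k / (2k+1)!`, agreeing with the functional calculus applied to
`λ ↦ sin(t√λ)/√λ` for self-adjoint positive (semi)definite `A`. -/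
noncomputable def sincSqrt (A : H →L[ℝ] H) (t : ℝ) : H →L[ℝ] H :=
  ∑' k : ℕ, ((-1 : ℝ) ^ k * t ^ (2 * k + 1) / (2 * k + 1).factorial) • A ^ k

/-! `C(t) = cos(√A t)` and `S(t) = (√A)⁻¹ sin(√A t)` are exponential generating series
`∑ tⁿ/n! • cₙ` whose coefficients satisfy `cᶜₙ₊₁ = -A cˢₙ` and `cˢₙ₊₁ = cᶜₙ`, so termwise
differentiation gives `C' = -A S` and `S' = C`.
For `A = A₀ + Q` with `A₀` symmetric, the pairing
`F(s) = ⟪S₀(t - s) g, A S(s) h⟫ - ⟪C₀(t - s) g, C(s) h⟫` then has derivative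
`⟪S₀(t - s) g, Q C(s) h⟫`, because the two `A₀`-terms cancel, and the identity is
`F(t) - F(0)` by the fundamental theorem of calculus. -/

section ExponentialSeries

variable {E : Type*} [NormedAddCommGroup E] [NormedSpace ℝ E] {v : ℕ → E} {C M : ℝ}

theorem norm_pow_div_factorial_smul_le (hv : ∀ n, ‖v n‖ ≤ C * M ^ n) {t R : ℝ} (ht : |t| ≤ R)
    (n : ℕ) : ‖(t ^ n / n.factorial) • v n‖ ≤ C * ((R * M) ^ n / n.factorial) := by
  rw [norm_smul, Real.norm_eq_abs, abs_div, abs_pow, Nat.abs_cast]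
  calc |t| ^ n / n.factorial * ‖v n‖ ≤ R ^ n / n.factorial * (C * M ^ n) :=
        mul_le_mul (by gcongr) (hv n) (norm_nonneg _)
          (div_nonneg (pow_nonneg ((abs_nonneg t).trans ht) n) n.factorial.cast_nonneg)
    _ = C * ((R * M) ^ n / n.factorial) := by ring

theorem summable_pow_div_factorial_smul [CompleteSpace E] (hv : ∀ n, ‖v n‖ ≤ C * M ^ n) (t : ℝ) :
    Summable fun n => (t ^ n / n.factorial) • v n :=
  .of_norm_bounded ((Real.summable_pow_div_factorial _).mul_left C)
    (norm_pow_div_factorial_smul_le hv le_rfl)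

theorem tsum_zero_pow_div_factorial_smul (v : ℕ → E) :
    ∑' n, ((0 : ℝ) ^ n / n.factorial) • v n = v 0 := by
  rw [tsum_eq_single 0 fun n hn => by simp [zero_pow hn]]
  simp

theorem hasDerivAt_pow_succ_div_factorial (n : ℕ) (y : ℝ) :
    HasDerivAt (fun t : ℝ => t ^ (n + 1) / ((n + 1).factorial : ℝ)) (y ^ n / n.factorial) y := by
  refine ((hasDerivAt_pow (n + 1) y).div_const _).congr_deriv ?_
  rw [Nat.factorial_succ]
  push_cast
  field_simp

theorem hasDerivAt_tsum_pow_div_factorial_smul [CompleteSpace E] (hv : ∀ n, ‖v n‖ ≤ C * M ^ n)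
    (s : ℝ) :
    HasDerivAt (fun t : ℝ => ∑' n, (t ^ n / n.factorial) • v n)
      (∑' n, (s ^ n / n.factorial) • v (n + 1)) s := by
  have hv_succ : ∀ n, ‖v (n + 1)‖ ≤ (C * M) * M ^ n := fun n => (hv (n + 1)).trans_eq (by ring)
  have hsplit : (fun t : ℝ => ∑' n, (t ^ n / n.factorial) • v n) =
      fun t => ∑' n, (t ^ (n + 1) / ((n + 1).factorial : ℝ)) • v (n + 1) + v 0 := by
    funext t
    rw [(summable_pow_div_factorial_smul hv t).tsum_eq_zero_add]
    simp [add_comm]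
  rw [hsplit]
  refine HasDerivAt.add_const _ ?_
  set R := |s| + 1
  have hball : ∀ y ∈ Metric.ball (0 : ℝ) R, |y| ≤ R := fun y hy => by
    simpa using (mem_ball_zero_iff.1 hy).le
  refine hasDerivAt_tsum_of_isPreconnected
    ((Real.summable_pow_div_factorial (R * M)).mul_left (C * M)) Metric.isOpen_ball
    (convex_ball _ _).isPreconnected
    (fun n y _ => (hasDerivAt_pow_succ_div_factorial n y).smul_const (v (n + 1)))
    (fun n y hy => norm_pow_div_factorial_smul_le hv_succ (hball y hy) n)
    (y₀ := s) ?_ ?_ ?_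
  · simp [R]
  · exact (summable_nat_add_iff 1).2 (summable_pow_div_factorial_smul hv s)
  · simp [R]

end ExponentialSeries

-- `‖1‖` need not be `1`: it is `0` when `R` is the zero ring, e.g. operators on the zero space.
theorem norm_pow_le_mul_add_one_pow {R : Type*} [NormedRing R] (a : R) (m : ℕ) :
    ‖a ^ m‖ ≤ (‖(1 : R)‖ + 1) * (‖a‖ + 1) ^ m := by
  rcases m.eq_zero_or_pos with rfl | hm
  · simp
  · calc ‖a ^ m‖ ≤ ‖a‖ ^ m := norm_pow_le' a hm
      _ ≤ (‖a‖ + 1) ^ m := by gcongr; linarith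
      _ ≤ (‖(1 : R)‖ + 1) * (‖a‖ + 1) ^ m := le_mul_of_one_le_left (by positivity) (by simp)

section Coefficients

variable {𝔸 : Type*} [NormedRing 𝔸] [NormedAlgebra ℝ 𝔸]

def cosSqrtCoeff (a : 𝔸) (n : ℕ) : 𝔸 :=
  if Even n then ((-1 : ℝ) ^ (n / 2)) • a ^ (n / 2) else 0

def sincSqrtCoeff (a : 𝔸) (n : ℕ) : 𝔸 :=
  if Even n then 0 else ((-1 : ℝ) ^ (n / 2)) • a ^ (n / 2)

theorem cosSqrtCoeff_succ (a : 𝔸) (n : ℕ) :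
    cosSqrtCoeff a (n + 1) = -(a * sincSqrtCoeff a n) := by
  obtain ⟨k, rfl | rfl⟩ := Nat.even_or_odd' n
  · simp [cosSqrtCoeff, sincSqrtCoeff]
  · have h1 : (2 * k + 1 + 1) / 2 = k + 1 := by omega
    have h2 : (2 * k + 1) / 2 = k := by omega
    simp [cosSqrtCoeff, sincSqrtCoeff, Nat.even_add_one, h1, h2, pow_succ']

theorem sincSqrtCoeff_succ (a : 𝔸) (n : ℕ) : sincSqrtCoeff a (n + 1) = cosSqrtCoeff a n := by
  obtain ⟨k, rfl | rfl⟩ := Nat.even_or_odd' n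
  · have h : (2 * k + 1) / 2 = k := by omega
    simp [cosSqrtCoeff, sincSqrtCoeff, h]
  · simp [cosSqrtCoeff, sincSqrtCoeff, Nat.even_add_one]

theorem norm_neg_one_pow_smul_pow_half_le (a : 𝔸) (n : ℕ) :
    ‖((-1 : ℝ) ^ (n / 2)) • a ^ (n / 2)‖ ≤ (‖(1 : 𝔸)‖ + 1) * (‖a‖ + 1) ^ n := by
  rw [norm_smul, norm_pow, norm_neg, norm_one, one_pow, one_mul]
  refine (norm_pow_le_mul_add_one_pow a _).trans ?_
  gcongr
  · simp
  · exact Nat.div_le_self n 2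

theorem norm_cosSqrtCoeff_le (a : 𝔸) (n : ℕ) :
    ‖cosSqrtCoeff a n‖ ≤ (‖(1 : 𝔸)‖ + 1) * (‖a‖ + 1) ^ n := by
  unfold cosSqrtCoeff
  split_ifs
  · exact norm_neg_one_pow_smul_pow_half_le a n
  · simp only [norm_zero]; positivity

theorem norm_sincSqrtCoeff_le (a : 𝔸) (n : ℕ) :
    ‖sincSqrtCoeff a n‖ ≤ (‖(1 : 𝔸)‖ + 1) * (‖a‖ + 1) ^ n := by
  unfold sincSqrtCoeff
  split_ifs
  · simp only [norm_zero]; positivity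
  · exact norm_neg_one_pow_smul_pow_half_le a n

end Coefficients

omit [CompleteSpace H] in
theorem cosSqrt_eq_tsum (A : H →L[ℝ] H) (t : ℝ) :
    cosSqrt A t = ∑' n, (t ^ n / n.factorial) • cosSqrtCoeff A n := by
  have hinj : Function.Injective fun k : ℕ => 2 * k := fun _ _ h => by dsimp only at h; omega
  rw [cosSqrt, ← hinj.tsum_eq (f := fun n => (t ^ n / n.factorial) • cosSqrtCoeff A n)]
  · refine tsum_congr fun k => ?_
    rw [cosSqrtCoeff, if_pos (even_two_mul k), Nat.mul_div_cancel_left k two_pos, smul_smul]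
    congr 1
    ring
  · intro n hn
    obtain ⟨k, rfl⟩ : Even n := by
      by_contra h
      exact hn (by simp [cosSqrtCoeff, h])
    exact ⟨k, two_mul k⟩

omit [CompleteSpace H] in
theorem sincSqrt_eq_tsum (A : H →L[ℝ] H) (t : ℝ) :
    sincSqrt A t = ∑' n, (t ^ n / n.factorial) • sincSqrtCoeff A n := by
  have hinj : Function.Injective fun k : ℕ => 2 * k + 1 := fun _ _ h => by dsimp only at h; omega
  rw [sincSqrt, ← hinj.tsum_eq (f := fun n => (t ^ n / n.factorial) • sincSqrtCoeff A n)]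
  · refine tsum_congr fun k => ?_
    have hk : (2 * k + 1) / 2 = k := by omega
    rw [sincSqrtCoeff, if_neg (Nat.not_even_two_mul_add_one k), hk, smul_smul]
    congr 1
    ring
  · intro n hn
    obtain ⟨k, rfl⟩ : Odd n := by
      by_contra h
      exact hn (by simp [sincSqrtCoeff, Nat.not_odd_iff_even.1 h])
    exact ⟨k, rfl⟩

omit [CompleteSpace H] in
theorem cosSqrt_zero (A : H →L[ℝ] H) : cosSqrt A 0 = 1 := by
  rw [cosSqrt_eq_tsum, tsum_zero_pow_div_factorial_smul (E := H →L[ℝ] H)]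
  simp [cosSqrtCoeff]

omit [CompleteSpace H] in
theorem sincSqrt_zero (A : H →L[ℝ] H) : sincSqrt A 0 = 0 := by
  rw [sincSqrt_eq_tsum, tsum_zero_pow_div_factorial_smul (E := H →L[ℝ] H)]
  simp [sincSqrtCoeff]

theorem hasDerivAt_cosSqrt (A : H →L[ℝ] H) (s : ℝ) :
    HasDerivAt (cosSqrt A) (-(A * sincSqrt A s)) s := by
  have h := hasDerivAt_tsum_pow_div_factorial_smul (norm_cosSqrtCoeff_le A) s
  rw [funext (cosSqrt_eq_tsum A), sincSqrt_eq_tsum,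
    ← (summable_pow_div_factorial_smul (norm_sincSqrtCoeff_le A) s).tsum_mul_left]
  simpa [cosSqrtCoeff_succ, mul_smul_comm, tsum_neg] using h

theorem hasDerivAt_sincSqrt (A : H →L[ℝ] H) (s : ℝ) :
    HasDerivAt (sincSqrt A) (cosSqrt A s) s := by
  have h := hasDerivAt_tsum_pow_div_factorial_smul (norm_sincSqrtCoeff_le A) s
  rw [funext (sincSqrt_eq_tsum A), cosSqrt_eq_tsum]
  simpa [sincSqrtCoeff_succ] using h

theorem continuous_cosSqrt (A : H →L[ℝ] H) : Continuous (cosSqrt A) :=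
  continuous_iff_continuousAt.2 fun s => (hasDerivAt_cosSqrt A s).continuousAt

theorem continuous_sincSqrt (A : H →L[ℝ] H) : Continuous (sincSqrt A) :=
  continuous_iff_continuousAt.2 fun s => (hasDerivAt_sincSqrt A s).continuousAt

theorem hasDerivAt_inner_sincSqrt_sub_inner_cosSqrt {A₀ : H →L[ℝ] H} (hA₀ : IsSelfAdjoint A₀)
    (Q : H →L[ℝ] H) (g h : H) (t s : ℝ) :
    HasDerivAt (fun r => ⟪sincSqrt A₀ (t - r) g, (A₀ + Q) (sincSqrt (A₀ + Q) r h)⟫ -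
        ⟪cosSqrt A₀ (t - r) g, cosSqrt (A₀ + Q) r h⟫)
      ⟪sincSqrt A₀ (t - s) g, Q (cosSqrt (A₀ + Q) s h)⟫ s := by
  set A := A₀ + Q
  have hw := ((hasDerivAt_sincSqrt A₀ (t - s)).comp_const_sub t s).clm_apply
    (hasDerivAt_const s g)
  have hz := ((hasDerivAt_cosSqrt A₀ (t - s)).comp_const_sub t s).clm_apply
    (hasDerivAt_const s g)
  have hv := (hasDerivAt_const s A).clm_apply
    ((hasDerivAt_sincSqrt A s).clm_apply (hasDerivAt_const s h))
  have hu := (hasDerivAt_cosSqrt A s).clm_apply (hasDerivAt_const s h)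
  refine ((hw.inner ℝ hv).sub (hz.inner ℝ hu)).congr_deriv ?_
  have hsymm := hA₀.isSymmetric (sincSqrt A₀ (t - s) g) (cosSqrt A s h)
  simp only [ContinuousLinearMap.coe_coe] at hsymm
  simp only [_root_.zero_apply, map_zero, add_zero, _root_.add_apply, zero_add, inner_add_right,
    _root_.neg_apply, inner_neg_left, mul_apply_eq_comp, neg_add_rev, inner_neg_right, neg_neg,
    hsymm, A]
  ring

theorem inner_cosSqrt_sub_inner_cosSqrt_eq_integral {A₀ : H →L[ℝ] H} (hA₀ : IsSelfAdjoint A₀)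
    (Q : H →L[ℝ] H) (g h : H) (t : ℝ) :
    ⟪cosSqrt A₀ t g, h⟫ - ⟪g, cosSqrt (A₀ + Q) t h⟫ =
      ∫ s in (0 : ℝ)..t, ⟪sincSqrt A₀ (t - s) g, Q (cosSqrt (A₀ + Q) s h)⟫ := by
  have hcont : Continuous fun s => ⟪sincSqrt A₀ (t - s) g, Q (cosSqrt (A₀ + Q) s h)⟫ :=
    (((continuous_sincSqrt A₀).comp (continuous_sub_left t)).clm_apply continuous_const).inner
      (Q.continuous.comp ((continuous_cosSqrt _).clm_apply continuous_const))
  rw [intervalIntegral.integral_eq_sub_of_hasDerivAt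
    (fun s _ => hasDerivAt_inner_sincSqrt_sub_inner_cosSqrt hA₀ Q g h t s)
    (hcont.intervalIntegrable 0 t)]
  simp only [sub_self, sincSqrt_zero, _root_.zero_apply, _root_.add_apply, inner_zero_left,
    cosSqrt_zero, one_apply_eq_self, zero_sub, sub_zero, map_zero, inner_zero_right,
    sub_neg_eq_add]
  ring

theorem lippmann_schwinger_identity_general (A₀ Q : H →L[ℝ] H)
    (hA₀ : IsSelfAdjoint A₀) (g : H) (t : ℝ) :
    ⟪g, cosSqrt A₀ t g⟫ - ⟪g, cosSqrt (A₀ + Q) t g⟫ =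
      ∫ s in (0 : ℝ)..t, ⟪sincSqrt A₀ (t - s) g, Q (cosSqrt (A₀ + Q) s g)⟫ := by
  rw [real_inner_comm]
  exact inner_cosSqrt_sub_inner_cosSqrt_eq_integral hA₀ Q g g t

/-- The Lippmann–Schwinger identity:
`⟨g, cos(√A₀ t) g⟩ − ⟨g, cos(√A t) g⟩ = ∫₀ᵗ ⟨w⁰(t−s), Q u(s)⟩ ds` with `A = A₀ + Q`,
`u(s) = cos(√A s) g` and `w⁰(r) = (√A₀)⁻¹ sin(√A₀ r) g`. -/
theorem lippmann_schwinger_identity (A₀ Q : H →L[ℝ] H)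
    (hA₀ : IsSelfAdjoint A₀) (hA₀pos : ∃ c > (0 : ℝ), ∀ x : H, c * ‖x‖ ^ 2 ≤ ⟪x, A₀ x⟫)
    (hQ : IsSelfAdjoint Q) (g : H) (t : ℝ) :
    ⟪g, cosSqrt A₀ t g⟫ - ⟪g, cosSqrt (A₀ + Q) t g⟫ =
      ∫ s in (0 : ℝ)..t, ⟪sincSqrt A₀ (t - s) g, Q (cosSqrt (A₀ + Q) s g)⟫ :=
  lippmann_schwinger_identity_general A₀ Q hA₀ g t
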